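/- arXiv:1510.06813 — 2 statements merged into one kernel-verified Lean document; each statement's English description precedes it below -/
import Mathlib

section
/- Let B, C, D be metric spaces, π_C a Borel probability measure on C, and z : B × C → D a measurable map such that for a given ε > 0 there exist δ ∈ (0, ε/2] and a Borel set C' ⊆ C with π_C(C') > 1 − ε/2 satisfying: d_B(b,b') < δ and c ∈ C' imply d_D(z(b,c), z(b',c)) < ε. Then for every Borel set D' ⊆ D and every Borel probability measure π_B on B, (π_B × π_C)(z^{-1}((D')^ε)) ≥ (π_B × π_C)((z^{-1}(D'))^δ) − ε/2, where for a set E in a metric space, E^η denotes the open η-enlargement {x : d(x, E) < η}. -/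
open MeasureTheory Filter Topology
open scoped ENNReal

/-! On `univ ×ˢ C'` the `δ`-enlargement of `z⁻¹' D'` lies inside `z⁻¹'` of the `ε`-thickening
of `D'`, by the continuity hypothesis; the rest has product measure `πC C'ᶜ < ε / 2`. -/

theorem MeasureTheory.measureReal_le_add_compl_of_inter_subset {α : Type*} [MeasurableSpace α]
    {μ : Measure α} [IsFiniteMeasure μ] {E F S : Set α} (h : E ∩ S ⊆ F) :
    μ.real E ≤ μ.real F + μ.real Sᶜ :=
  calc μ.real E ≤ μ.real (F ∪ Sᶜ) := by
        refine measureReal_mono fun x hx => ?_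
        by_cases hS : x ∈ S
        exacts [Or.inl (h ⟨hx, hS⟩), Or.inr hS]
    _ ≤ μ.real F + μ.real Sᶜ := measureReal_union_le _ _

theorem setOf_exists_dist_lt_inter_prod_subset_preimage_thickening {B C D : Type*}
    [PseudoMetricSpace B] [PseudoMetricSpace D] {z : B × C → D} {ε δ : ℝ} {C' : Set C}
    (hcont : ∀ (b b' : B) (c : C), dist b b' < δ → c ∈ C' →
      dist (z (b, c)) (z (b', c)) < ε) (D' : Set D) :
    {p : B × C | ∃ b' : B, dist p.1 b' < δ ∧ (b', p.2) ∈ z ⁻¹' D'} ∩ Set.univ ×ˢ C' ⊆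
      z ⁻¹' Metric.thickening ε D' := by
  rintro ⟨b, c⟩ ⟨⟨b', hbb', hzD⟩, -, hc⟩
  exact Metric.mem_thickening_iff.2 ⟨z (b', c), hzD, hcont b b' c hbb' hc⟩

theorem MeasureTheory.measureReal_prod_univ_prod_compl {B C : Type*}
    [MeasurableSpace B] [MeasurableSpace C] (πB : Measure B) (πC : Measure C)
    [IsProbabilityMeasure πB] [IsProbabilityMeasure πC] {C' : Set C} (hC' : MeasurableSet C') :
    (πB.prod πC).real (Set.univ ×ˢ C')ᶜ = 1 - πC.real C' := by
  rw [probReal_compl_eq_one_sub (MeasurableSet.univ.prod hC'), measureReal_prod_prod,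
    probReal_univ, one_mul]

theorem stmt_8_general {B C D : Type*}
    [MetricSpace B] [MeasurableSpace B]
    [MetricSpace C] [MeasurableSpace C]
    [MetricSpace D]
    (πB : Measure B) (πC : Measure C)
    [IsProbabilityMeasure πB] [IsProbabilityMeasure πC]
    (z : B × C → D)
    (ε δ : ℝ)
    (C' : Set C) (hC'm : MeasurableSet C') (hC' : (πC C').toReal > 1 - ε / 2)
    (hcont : ∀ (b b' : B) (c : C), dist b b' < δ → c ∈ C' →
      dist (z (b, c)) (z (b', c)) < ε)
    (D' : Set D) :
    ((πB.prod πC) (z ⁻¹' (Metric.thickening ε D'))).toReal ≥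
      ((πB.prod πC)
        {p : B × C | ∃ b' : B, dist p.1 b' < δ ∧ (b', p.2) ∈ z ⁻¹' D'}).toReal
        - ε / 2 := by
  have hsplit := measureReal_le_add_compl_of_inter_subset (μ := πB.prod πC)
    (setOf_exists_dist_lt_inter_prod_subset_preimage_thickening hcont D')
  rw [measureReal_prod_univ_prod_compl πB πC hC'm] at hsplit
  simp only [measureReal_def] at hsplit
  linarith

/-- Enlargement inequality: under probabilistic uniform continuity of `z` off a small
exceptional set `C'ᶜ`, the measure of `z⁻¹` of the `ε`-enlargement of `D'` dominates the
measure of the `δ`-enlargement (in the `B`-coordinate) of `z⁻¹(D')` minus `ε/2`. -/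
theorem stmt_8 {B C D : Type*}
    [MetricSpace B] [MeasurableSpace B] [BorelSpace B]
    [MetricSpace C] [MeasurableSpace C] [BorelSpace C]
    [MetricSpace D] [MeasurableSpace D] [BorelSpace D]
    (πB : Measure B) (πC : Measure C)
    [IsProbabilityMeasure πB] [IsProbabilityMeasure πC]
    (z : B × C → D) (hz : Measurable z)
    (ε δ : ℝ) (hε : 0 < ε) (hδ0 : 0 < δ) (hδ : δ ≤ ε / 2)
    (C' : Set C) (hC'm : MeasurableSet C') (hC' : (πC C').toReal > 1 - ε / 2)
    (hcont : ∀ (b b' : B) (c : C), dist b b' < δ → c ∈ C' →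
      dist (z (b, c)) (z (b', c)) < ε)
    (D' : Set D) (hD' : MeasurableSet D') :
    ((πB.prod πC) (z ⁻¹' (Metric.thickening ε D'))).toReal ≥
      ((πB.prod πC)
        {p : B × C | ∃ b' : B, dist p.1 b' < δ ∧ (b', p.2) ∈ z ⁻¹' D'}).toReal
        - ε / 2 :=
  stmt_8_general πB πC z ε δ C' hC'm hC' hcont D'
end

section
/- Let S be a metric space, (v_t)_{t} a finite family of functions defined by backward recursion v_{T+1} ≡ 0 and v_t(s) = ∫_G [ψ_t(s, x_t(s,g)) + ∫_I v_{t+1}(θ_t(s, x_t(s,g), i)) dι(i)] dγ(g), where each ψ_t : S × X → [−C_t, C_t] is jointly continuous, each θ_t(·,·,i) satisfies: for every ε > 0 there are δ_S, δ_X > 0 such that d_S(s,s') < δ_S and d_X(x,x') < δ_X imply ι({i : d_S(θ_t(s,x,i), θ_t(s',x',i)) < ε}) > 1 − ε, and each x_t satisfies: for every ε > 0 there is δ > 0 such that d_S(s,s') < δ implies γ({g : d_X(x_t(s,g), x_t(s',g)) < ε}) > 1 − ε. Then each v_t is a bounded continuous function of s. -/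
open MeasureTheory Filter Topology

/-!
Each `v t` is an integral, against a probability measure, of a bounded continuous function
composed with a random map that depends continuously on the parameter in probability.
Such integrals depend continuously on the parameter: away from an event of small probability
the random map moves little, and (off another small event) the point it starts from lies in a
region where the integrand oscillates little. Backward induction from `v (T + 1) = 0` then
propagates boundedness and continuity through the two integrations of the recursion.
-/

open Metric Set

section Oscillation

variable {E : Type*} [PseudoMetricSpace E]

def smallOscillationSet (u : E → ℝ) (η δ : ℝ) : Set E :=
  {y | ∀ z ∈ ball y δ, ∀ z' ∈ ball y δ, |u z - u z'| ≤ η}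

theorem isClosed_smallOscillationSet (u : E → ℝ) (η δ : ℝ) :
    IsClosed (smallOscillationSet u η δ) := by
  rw [← isOpen_compl_iff, isOpen_iff_mem_nhds]
  intro y hy
  simp only [smallOscillationSet, mem_compl_iff, mem_ofPred_eq, not_forall, not_le] at hy
  obtain ⟨z, hz, z', hz', hzz'⟩ := hy
  filter_upwards [isOpen_ball.mem_nhds (mem_ball_comm.1 hz),
    isOpen_ball.mem_nhds (mem_ball_comm.1 hz')] with y' hz hz' hy'
  exact (hy' z (mem_ball_comm.1 hz) z' (mem_ball_comm.1 hz')).not_gt hzz'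

theorem smallOscillationSet_anti (u : E → ℝ) (η : ℝ) : Antitone (smallOscillationSet u η) :=
  fun _ _ hδ _ hy z hz z' hz' => hy z (ball_subset_ball hδ hz) z' (ball_subset_ball hδ hz')

theorem iUnion_smallOscillationSet {u : E → ℝ} (hu : Continuous u) {η : ℝ} (hη : 0 < η) :
    ⋃ n : ℕ, smallOscillationSet u η (1 / (n + 1)) = univ := by
  refine eq_univ_of_forall fun y => ?_
  obtain ⟨δ, hδ, hyδ⟩ := Metric.continuous_iff.1 hu y (η / 2) (half_pos hη)
  obtain ⟨n, hn⟩ := exists_nat_one_div_lt hδ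
  refine mem_iUnion.2 ⟨n, fun z hz z' hz' => ?_⟩
  have h := hyδ z (hz.trans hn)
  have h' := hyδ z' (hz'.trans hn)
  rw [Real.dist_eq] at h h'
  calc |u z - u z'| ≤ |u z - u y| + |u y - u z'| := abs_sub_le _ _ _
    _ ≤ η := by rw [abs_sub_comm (u y)]; linarith

theorem exists_lt_measureReal_preimage_smallOscillationSet {α : Type*} [MeasurableSpace α]
    {μ : Measure α} [IsProbabilityMeasure μ] {u : E → ℝ} (hu : Continuous u) (f : α → E)
    {η ρ : ℝ} (hη : 0 < η) (hρ : 0 < ρ) :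
    ∃ δ > 0, 1 - ρ < μ.real (f ⁻¹' smallOscillationSet u η δ) := by
  set V : ℕ → Set α := fun n => f ⁻¹' smallOscillationSet u η (1 / (n + 1))
  have hV : Monotone V := fun m n hmn => preimage_mono <| smallOscillationSet_anti u η <|
    one_div_le_one_div_of_le (by positivity) (by exact_mod_cast Nat.add_le_add_right hmn 1)
  have hVuniv : ⋃ n, V n = univ := by
    rw [← preimage_iUnion, iUnion_smallOscillationSet hu hη, preimage_univ]
  have hlim : Tendsto (fun n => μ.real (V n)) atTop (𝓝 1) := by
    have h := tendsto_measure_iUnion_atTop (μ := μ) hV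
    rw [hVuniv, measure_univ] at h
    exact (ENNReal.tendsto_toReal ENNReal.one_ne_top).comp h
  obtain ⟨n, hn⟩ := (hlim.eventually (lt_mem_nhds (sub_lt_self 1 hρ))).exists
  exact ⟨1 / (n + 1), by positivity, hn⟩

end Oscillation

section ProbabilityEstimates

variable {α : Type*} [MeasurableSpace α] {μ : Measure α} [IsProbabilityMeasure μ]

theorem abs_integral_le_of_forall_abs_le {f : α → ℝ} {M : ℝ} (hf : ∀ a, |f a| ≤ M) :
    |∫ a, f a ∂μ| ≤ M := by
  simpa using norm_integral_le_of_norm_le_const (μ := μ) (f := f) (Eventually.of_forall hf)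

theorem measureReal_le_two_sub_of_inter_subset_compl {A B D : Set α} (hB : MeasurableSet B)
    (hD : MeasurableSet D) (h : A ∩ B ⊆ Dᶜ) : μ.real D ≤ 2 - μ.real A - μ.real B := by
  have hA : A ⊆ Dᶜ ∪ Bᶜ := fun a ha => by
    by_cases haB : a ∈ B
    exacts [Or.inl (h ⟨ha, haB⟩), Or.inr haB]
  have := (measureReal_mono (μ := μ) hA).trans (measureReal_union_le _ _)
  rw [measureReal_compl hD, measureReal_compl hB, probReal_univ] at this
  linarith

theorem integral_abs_le_add_mul_measureReal {φ : α → ℝ} (hφ : Measurable φ) {η K : ℝ}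
    (hη : 0 ≤ η) (hK : ∀ a, |φ a| ≤ K) :
    ∫ a, |φ a| ∂μ ≤ η + K * μ.real {a | η < |φ a|} := by
  set D := {a | η < |φ a|}
  have hD : MeasurableSet D := measurableSet_lt measurable_const hφ.abs
  have hbound : ∀ a, |φ a| ≤ η + D.indicator (fun _ => K) a := fun a => by
    by_cases ha : a ∈ D
    · rw [indicator_of_mem ha]; linarith [hK a]
    · rw [indicator_of_notMem ha]; simpa [D] using ha
  have hind : Integrable (D.indicator fun _ => K) μ :=
    (integrable_indicator_iff hD).2 (integrable_const K).integrableOn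
  calc ∫ a, |φ a| ∂μ ≤ ∫ a, (η + D.indicator (fun _ => K) a) ∂μ :=
        integral_mono (.of_bound hφ.abs.aestronglyMeasurable K
          (Eventually.of_forall fun a => by simpa using hK a))
          ((integrable_const η).add hind) hbound
    _ = η + K * μ.real D := by
        rw [integral_add (integrable_const η) hind, integral_indicator_const K hD]
        simp [mul_comm]

end ProbabilityEstimates

section ContinuityInProbability

variable {α E : Type*} [MeasurableSpace α] [PseudoMetricSpace E]

/-- Borel measurability, phrased so that it makes sense for maps into `S × X`, whose product
σ-algebra need not be the Borel one. -/
def ClosedPreimageMeasurable (f : α → E) : Prop :=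
  ∀ U : Set E, IsClosed U → MeasurableSet (f ⁻¹' U)

theorem ClosedPreimageMeasurable.comp_continuous {f : α → E} (hf : ClosedPreimageMeasurable f)
    {u : E → ℝ} (hu : Continuous u) : Measurable (u ∘ f) :=
  measurable_of_isClosed fun _ hU => hf _ (hU.preimage hu)

theorem Measurable.closedPreimageMeasurable [MeasurableSpace E] [OpensMeasurableSpace E]
    {f : α → E} (hf : Measurable f) : ClosedPreimageMeasurable f :=
  fun _ hU => hf hU.measurableSet

theorem Measurable.closedPreimageMeasurable_prodMk_left {X : Type*} [PseudoMetricSpace X]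
    [MeasurableSpace X] [OpensMeasurableSpace X] {f : α → X} (hf : Measurable f) (e : E) :
    ClosedPreimageMeasurable fun a => (e, f a) :=
  fun _ hU => hf (hU.preimage (Continuous.prodMk_right e)).measurableSet

def ContinuousInProbability {P : Type*} [TopologicalSpace P] (μ : Measure α)
    (F : P → α → E) : Prop :=
  ∀ p, ∀ r > 0, ∀ ρ > 0, ∀ᶠ q in 𝓝 p, 1 - ρ < μ.real {a | dist (F q a) (F p a) < r}

theorem continuousInProbability_of_forall_dist_lt {P : Type*} [PseudoMetricSpace P]
    {μ : Measure α} [IsFiniteMeasure μ] {F : P → α → E}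
    (h : ∀ ε > 0, ∃ δ > 0, ∀ p q, dist p q < δ →
      1 - ε < μ.real {a | dist (F p a) (F q a) < ε}) :
    ContinuousInProbability μ F := by
  intro p r hr ρ hρ
  obtain ⟨δ, hδ, hF⟩ := h (min r ρ) (lt_min hr hρ)
  filter_upwards [ball_mem_nhds p hδ] with q hq
  have hmono : μ.real {a | dist (F q a) (F p a) < min r ρ} ≤
      μ.real {a | dist (F q a) (F p a) < r} :=
    measureReal_mono fun a ha => lt_of_lt_of_le ha (min_le_left r ρ)
  linarith [hF q p hq, min_le_right r ρ]

variable {μ : Measure α} [IsProbabilityMeasure μ]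

theorem tendsto_integral_comp_of_forall_measureReal_dist_lt {β : Type*} {l : Filter β}
    {u : E → ℝ} {M : ℝ} (hu : Continuous u) (hub : ∀ e, |u e| ≤ M)
    {f : β → α → E} {f₀ : α → E} (hf : ∀ b, ClosedPreimageMeasurable (f b))
    (hf₀ : ClosedPreimageMeasurable f₀)
    (hconv : ∀ r > 0, ∀ ρ > 0, ∀ᶠ b in l,
      1 - ρ < μ.real {a | dist (f b a) (f₀ a) < r}) :
    Tendsto (fun b => ∫ a, u (f b a) ∂μ) l (𝓝 (∫ a, u (f₀ a) ∂μ)) := by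
  obtain ⟨a₀⟩ := nonempty_of_isProbabilityMeasure μ
  have hM : 0 ≤ M := (abs_nonneg _).trans (hub (f₀ a₀))
  rw [Metric.tendsto_nhds]
  intro ε hε
  obtain ⟨ρ, hρ, hMρ⟩ := exists_pos_mul_lt (half_pos hε) (2 * M)
  obtain ⟨δ, hδ, hV⟩ := exists_lt_measureReal_preimage_smallOscillationSet (μ := μ) hu f₀
    (half_pos hε) (half_pos hρ)
  filter_upwards [hconv δ hδ (ρ / 2) (half_pos hρ)] with b hb
  have hdiff : Measurable fun a => u (f b a) - u (f₀ a) :=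
    ((hf b).comp_continuous hu).sub (hf₀.comp_continuous hu)
  set D := {a | ε / 2 < |u (f b a) - u (f₀ a)|}
  have hsmall : μ.real D < ρ := by
    refine (measureReal_le_two_sub_of_inter_subset_compl (A := {a | dist (f b a) (f₀ a) < δ})
      (hf₀ _ (isClosed_smallOscillationSet u _ δ)) (measurableSet_lt measurable_const hdiff.abs)
      fun a ⟨hclose, hosc⟩ => not_lt.2 (hosc _ hclose _ (mem_ball_self hδ))).trans_lt ?_
    linarith
  have hint : ∀ g : α → E, ClosedPreimageMeasurable g → Integrable (fun a => u (g a)) μ :=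
    fun g hg => .of_bound (hg.comp_continuous hu).aestronglyMeasurable M (.of_forall fun a => hub _)
  rw [Real.dist_eq, ← integral_sub (hint _ (hf b)) (hint _ hf₀)]
  calc |∫ a, (u (f b a) - u (f₀ a)) ∂μ| ≤ ∫ a, |u (f b a) - u (f₀ a)| ∂μ :=
        abs_integral_le_integral_abs
    _ ≤ ε / 2 + 2 * M * μ.real D := integral_abs_le_add_mul_measureReal hdiff (by positivity)
        fun a => (abs_sub _ _).trans (by linarith [hub (f b a), hub (f₀ a)])
    _ < ε := by nlinarith

theorem ContinuousInProbability.continuous_integral_comp {P : Type*} [TopologicalSpace P]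
    {F : P → α → E} (hF : ContinuousInProbability μ F)
    (hFm : ∀ p, ClosedPreimageMeasurable (F p)) {u : E → ℝ} {M : ℝ} (hu : Continuous u)
    (hub : ∀ e, |u e| ≤ M) : Continuous fun p => ∫ a, u (F p a) ∂μ :=
  continuous_iff_continuousAt.2 fun p =>
    tendsto_integral_comp_of_forall_measureReal_dist_lt hu hub hFm (hFm p) (hF p)

end ContinuityInProbability

section BellmanOperator

variable {S X G I : Type*} [MeasurableSpace G] [MeasurableSpace I]
  {γ : Measure G} {ι : Measure I}
  {ψ : S × X → ℝ} {θ : S × X × I → S} {x : S × G → X} {w : S → ℝ} {C M : ℝ}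

noncomputable def bellman (γ : Measure G) (ι : Measure I) (ψ : S × X → ℝ)
    (θ : S × X × I → S) (x : S × G → X) (w : S → ℝ) (s : S) : ℝ :=
  ∫ g, (ψ (s, x (s, g)) + ∫ i, w (θ (s, x (s, g), i)) ∂ι) ∂γ

theorem continuousInProbability_transition [PseudoMetricSpace S] [PseudoMetricSpace X]
    [IsFiniteMeasure ι]
    (hθ : ∀ ε > (0 : ℝ), ∃ δS > (0 : ℝ), ∃ δX > (0 : ℝ),
      ∀ (s s' : S) (xx xx' : X), dist s s' < δS → dist xx xx' < δX →
        (ι {i : I | dist (θ (s, xx, i)) (θ (s', xx', i)) < ε}).toReal > 1 - ε) :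
    ContinuousInProbability ι fun (p : S × X) i => θ (p.1, p.2, i) := by
  refine continuousInProbability_of_forall_dist_lt fun ε hε => ?_
  obtain ⟨δS, hδS, δX, hδX, h⟩ := hθ ε hε
  refine ⟨min δS δX, lt_min hδS hδX, fun p q hpq => ?_⟩
  rw [Prod.dist_eq, max_lt_iff] at hpq
  exact h _ _ _ _ (hpq.1.trans_le (min_le_left _ _)) (hpq.2.trans_le (min_le_right _ _))

theorem continuousInProbability_graph [PseudoMetricSpace S] [PseudoMetricSpace X]
    [IsFiniteMeasure γ]
    (hx : ∀ ε > (0 : ℝ), ∃ δ > (0 : ℝ), ∀ s s' : S, dist s s' < δ →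
      (γ {g : G | dist (x (s, g)) (x (s', g)) < ε}).toReal > 1 - ε) :
    ContinuousInProbability γ fun s g => (s, x (s, g)) := by
  refine continuousInProbability_of_forall_dist_lt fun ε hε => ?_
  obtain ⟨δ, hδ, h⟩ := hx ε hε
  refine ⟨min δ ε, lt_min hδ hε, fun s s' hss' => ?_⟩
  refine (h s s' (hss'.trans_le (min_le_left _ _))).trans_le (measureReal_mono fun g hg => ?_)
  exact (Prod.dist_eq ..).trans_lt (max_lt (hss'.trans_le (min_le_right _ _)) hg)

theorem abs_add_integral_comp_le [IsProbabilityMeasure ι] (hψb : ∀ p, |ψ p| ≤ C)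
    (hwb : ∀ s, |w s| ≤ M) (p : S × X) :
    |ψ p + ∫ i, w (θ (p.1, p.2, i)) ∂ι| ≤ C + M :=
  (abs_add_le _ _).trans (add_le_add (hψb p) (abs_integral_le_of_forall_abs_le fun _ => hwb _))

theorem abs_bellman_le [IsProbabilityMeasure γ] [IsProbabilityMeasure ι]
    (hψb : ∀ p, |ψ p| ≤ C) (hwb : ∀ s, |w s| ≤ M) (s : S) :
    |bellman γ ι ψ θ x w s| ≤ C + M :=
  abs_integral_le_of_forall_abs_le fun g => abs_add_integral_comp_le hψb hwb (s, x (s, g))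

theorem continuous_bellman [PseudoMetricSpace S] [MeasurableSpace S] [OpensMeasurableSpace S]
    [PseudoMetricSpace X] [MeasurableSpace X] [OpensMeasurableSpace X]
    [IsProbabilityMeasure γ] [IsProbabilityMeasure ι] (hθm : Measurable θ) (hxm : Measurable x)
    (hψb : ∀ p, |ψ p| ≤ C) (hψc : Continuous ψ)
    (hθ : ∀ ε > (0 : ℝ), ∃ δS > (0 : ℝ), ∃ δX > (0 : ℝ),
      ∀ (s s' : S) (xx xx' : X), dist s s' < δS → dist xx xx' < δX →
        (ι {i : I | dist (θ (s, xx, i)) (θ (s', xx', i)) < ε}).toReal > 1 - ε)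
    (hx : ∀ ε > (0 : ℝ), ∃ δ > (0 : ℝ), ∀ s s' : S, dist s s' < δ →
      (γ {g : G | dist (x (s, g)) (x (s', g)) < ε}).toReal > 1 - ε)
    (hw : Continuous w) (hwb : ∀ s, |w s| ≤ M) :
    Continuous (bellman γ ι ψ θ x w) := by
  have hcont : Continuous fun p : S × X => ψ p + ∫ i, w (θ (p.1, p.2, i)) ∂ι :=
    hψc.add <| (continuousInProbability_transition hθ).continuous_integral_comp
      (fun p => (hθm.comp (by fun_prop)).closedPreimageMeasurable) hw hwb
  exact (continuousInProbability_graph hx).continuous_integral_comp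
    (fun s => (hxm.comp measurable_prodMk_left).closedPreimageMeasurable_prodMk_left s) hcont
    (abs_add_integral_comp_le hψb hwb)

end BellmanOperator

/-- Continuity and boundedness of the backward-recursion value functions of a nonatomic
game with a fixed environment: if the payoffs `ψ_t` are bounded and jointly continuous,
the transitions `θ_t` are probabilistically continuous in `(s,x)`, and the policies `x_t`
are probabilistically continuous in `s`, then each value function `v_t` is bounded and
continuous. -/
theorem stmt_14 {S X G I : Type*}
    [MetricSpace S] [MeasurableSpace S] [BorelSpace S]
    [MetricSpace X] [MeasurableSpace X] [BorelSpace X]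
    [MeasurableSpace G] [MeasurableSpace I]
    (γ : Measure G) (ι : Measure I) [IsProbabilityMeasure γ] [IsProbabilityMeasure ι]
    (T : ℕ) (ψ : ℕ → S × X → ℝ) (C : ℕ → ℝ)
    (θ : ℕ → S × X × I → S) (x : ℕ → S × G → X)
    (v : ℕ → S → ℝ)
    (hθm : ∀ t, Measurable (θ t)) (hxm : ∀ t, Measurable (x t))
    (hψb : ∀ t (s : S) (xx : X), |ψ t (s, xx)| ≤ C t)
    (hψc : ∀ t, Continuous (ψ t))
    (hθ : ∀ t, ∀ ε > (0 : ℝ), ∃ δS > (0 : ℝ), ∃ δX > (0 : ℝ),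
      ∀ (s s' : S) (xx xx' : X), dist s s' < δS → dist xx xx' < δX →
        (ι {i : I | dist (θ t (s, xx, i)) (θ t (s', xx', i)) < ε}).toReal > 1 - ε)
    (hx : ∀ t, ∀ ε > (0 : ℝ), ∃ δ > (0 : ℝ), ∀ s s' : S, dist s s' < δ →
      (γ {g : G | dist (x t (s, g)) (x t (s', g)) < ε}).toReal > 1 - ε)
    (hvT : ∀ s, v (T + 1) s = 0)
    (hrec : ∀ t ≤ T, ∀ s, v t s =
      ∫ g, (ψ t (s, x t (s, g)) + ∫ i, v (t + 1) (θ t (s, x t (s, g), i)) ∂ι) ∂γ) :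
    ∀ t ≤ T + 1, (∃ M : ℝ, ∀ s, |v t s| ≤ M) ∧ Continuous (v t) := by
  intro t ht
  induction ht using Nat.decreasingInduction with
  | self =>
    have hv : v (T + 1) = 0 := funext hvT
    exact ⟨⟨0, fun s => by simp [hv]⟩, hv ▸ continuous_const⟩
  | of_succ t ht ih =>
    obtain ⟨⟨M, hM⟩, hc⟩ := ih
    have hv : v t = bellman γ ι (ψ t) (θ t) (x t) (v (t + 1)) :=
      funext (hrec t (Nat.lt_succ_iff.1 ht))
    rw [hv]
    exact ⟨⟨C t + M, abs_bellman_le (fun p => hψb t p.1 p.2) hM⟩,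
      continuous_bellman (hθm t) (hxm t) (fun p => hψb t p.1 p.2) (hψc t) (hθ t) (hx t) hc hM⟩
end
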